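/- arXiv:1110.0321 — 6 statements merged into one kernel-verified Lean document; each statement's English description precedes it below -/
import Mathlib

section
/- (Lemma estimating p^+) Let B be a Boolean algebra, L a sublattice of B, a_i < b_i in L, ê_I ∈ L^n as usual, and f: {ê_I : I ⊆ [n]} → L monotone and satisfying (★). Define c_I^+ = f(ê_I) ∨ ⋁_{i∈I} b_i' (complement in B) and p^+(x) = ⋁_{I ⊆ [n]} (c_I^+ ∧ ⋀_{i∈I} x_i). Then p^+(ê_J) ≤ f(ê_J) for all J ⊆ [n]. -/
/-- The generalized characteristic vector `ê_I`. -/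
def eVec {n : ℕ} {B : Type*} (a b : Fin n → B) (I : Finset (Fin n)) : Fin n → B :=
  fun i => if i ∈ I then b i else a i

/-!
Split each term of `p⁺(ê_J)` along the join defining `c_I⁺`. Since `ê_J(i) ≤ b_i`, the meet
`⋀_{i∈I} ê_J(i)` is disjoint from every `b_i'` with `i ∈ I`, so only `f(ê_I) ∧ ⋀_{i∈I} ê_J(i)`
remains. That meet lies below `a_k` for each `k ∈ I \ J`, and the lower half of (★) together with
monotonicity removes such `k` from `I` one at a time, ending at `f(ê_{I ∩ J}) ≤ f(ê_J)`.
-/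

section EraseByMeet

variable {ι α : Type*} [DecidableEq ι] [SemilatticeInf α] {g : Finset ι → α} {a : ι → α}

theorem inf_le_apply_erase (hg : Monotone g) (hstar : ∀ I k, g (insert k I) ⊓ a k ≤ g I)
    (I : Finset ι) (k : ι) : g I ⊓ a k ≤ g (I.erase k) :=
  calc g I ⊓ a k ≤ g (insert k (I.erase k)) ⊓ a k :=
        inf_le_inf_right _ (hg (Finset.insert_erase_subset k I))
    _ ≤ g (I.erase k) := hstar _ k

theorem inf_finsetInf_le_apply_sdiff [OrderTop α] (hg : Monotone g)
    (hstar : ∀ I k, g (insert k I) ⊓ a k ≤ g I) (S I : Finset ι) :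
    g I ⊓ S.inf a ≤ g (I \ S) := by
  induction S using Finset.induction generalizing I with
  | empty => simp
  | insert k S _ ih =>
    calc g I ⊓ (insert k S).inf a = g I ⊓ a k ⊓ S.inf a := by rw [Finset.inf_insert, inf_assoc]
      _ ≤ g (I.erase k) ⊓ S.inf a := inf_le_inf_right _ (inf_le_apply_erase hg hstar I k)
      _ ≤ g (I.erase k \ S) := ih _
      _ = g (I \ insert k S) := by rw [Finset.erase_sdiff_comm, Finset.sdiff_insert]

end EraseByMeet

theorem disjoint_sup_compl_inf {ι B : Type*} [BooleanAlgebra B] {I : Finset ι} {b x : ι → B}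
    (h : ∀ i ∈ I, x i ≤ b i) : Disjoint (I.sup fun i => (b i)ᶜ) (I.inf x) :=
  Finset.disjoint_sup_left.2 fun i hi =>
    disjoint_compl_left.mono_right ((Finset.inf_le hi).trans (h i hi))

section EVec

variable {n : ℕ} {B : Type*}

theorem eVec_le_right [Preorder B] {a b : Fin n → B} (hab : a ≤ b) (J : Finset (Fin n))
    (i : Fin n) : eVec a b J i ≤ b i := by
  unfold eVec
  split_ifs
  exacts [le_rfl, hab i]

theorem inf_eVec_le_inf_sdiff [SemilatticeInf B] [OrderTop B] (a b : Fin n → B)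
    (I J : Finset (Fin n)) : I.inf (eVec a b J) ≤ (I \ J).inf a :=
  Finset.le_inf fun i hi => by
    obtain ⟨hiI, hiJ⟩ := Finset.mem_sdiff.1 hi
    simpa [eVec, hiJ] using Finset.inf_le (f := eVec a b J) hiI

end EVec

theorem stmt_9_general {n : ℕ} {B : Type*} [BooleanAlgebra B]
    (a b : Fin n → B)
    (hab : ∀ i, a i < b i)
    (f : (Fin n → B) → B)
    (hmono : ∀ I J : Finset (Fin n), I ⊆ J → f (eVec a b I) ≤ f (eVec a b J))
    (hstar : ∀ (I : Finset (Fin n)) (k : Fin n),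
      f (eVec a b (insert k I)) ⊓ a k ≤ f (eVec a b I) ∧
        f (eVec a b I) ≤ f (eVec a b (I.erase k)) ⊔ b k)
    (J : Finset (Fin n)) :
    (Finset.univ.powerset).sup
        (fun I : Finset (Fin n) =>
          (f (eVec a b I) ⊔ I.sup (fun i => (b i)ᶜ)) ⊓ I.inf (eVec a b J))
      ≤ f (eVec a b J) := by
  refine Finset.sup_le fun I _ => ?_
  have hdisj : Disjoint (I.sup fun i => (b i)ᶜ) (I.inf (eVec a b J)) :=
    disjoint_sup_compl_inf fun i _ => eVec_le_right (fun i => (hab i).le) J i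
  rw [inf_sup_right, hdisj.eq_bot, sup_bot_eq]
  calc f (eVec a b I) ⊓ I.inf (eVec a b J) ≤ f (eVec a b I) ⊓ (I \ J).inf a :=
        inf_le_inf_left _ (inf_eVec_le_inf_sdiff a b I J)
    _ ≤ f (eVec a b (I \ (I \ J))) :=
        inf_finsetInf_le_apply_sdiff (g := fun I => f (eVec a b I))
          (fun I K h => hmono I K h) (fun I k => (hstar I k).1) _ _
    _ ≤ f (eVec a b J) :=
        hmono _ _ (by rw [sdiff_sdiff_right_self]; exact Finset.inter_subset_right)

/-- estimating `p⁺`: with `c_I⁺ = f(ê_I) ∨ ⋁_{i∈I} bᵢ'` and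
`p⁺(x) = ⋁_I (c_I⁺ ∧ ⋀_{i∈I} x_i)`, if `f` is monotone and satisfies (★) then
`p⁺(ê_J) ≤ f(ê_J)` for all `J`. -/
theorem stmt_9 {n : ℕ} {B : Type*} [BooleanAlgebra B] (L : Sublattice B)
    (a b : Fin n → B) (haL : ∀ i, a i ∈ L) (hbL : ∀ i, b i ∈ L)
    (hab : ∀ i, a i < b i)
    (f : (Fin n → B) → B) (hfL : ∀ I : Finset (Fin n), f (eVec a b I) ∈ L)
    (hmono : ∀ I J : Finset (Fin n), I ⊆ J → f (eVec a b I) ≤ f (eVec a b J))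
    (hstar : ∀ (I : Finset (Fin n)) (k : Fin n),
      f (eVec a b (insert k I)) ⊓ a k ≤ f (eVec a b I) ∧
        f (eVec a b I) ≤ f (eVec a b (I.erase k)) ⊔ b k)
    (J : Finset (Fin n)) :
    (Finset.univ.powerset).sup
        (fun I : Finset (Fin n) =>
          (f (eVec a b I) ⊔ I.sup (fun i => (b i)ᶜ)) ⊓ I.inf (eVec a b J))
      ≤ f (eVec a b J) :=
  stmt_9_general a b hab f hmono hstar J
end

section
/- (Lemma estimating p^-) Let B be a Boolean algebra, L ⊆ B a sublattice, a_i < b_i in L, and f: {ê_I : I ⊆ [n]} → L monotone and satisfying (★). Define c_I^- = f(ê_I) ∧ ⋀_{i∉I} a_i' and p^-(x) = ⋁_{I ⊆ [n]} (c_I^- ∧ ⋀_{i∈I} x_i). Then p^-(ê_J) ≥ f(ê_J) for all J ⊆ [n]. -/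
/-- Decomposition: any `x` is below the join over `S ⊆ s` of
`x ⊓ ⋀_{i∈S} t i ⊓ ⋀_{i∈s\S} (t i)ᶜ`. -/
lemma sup_decomp {n : ℕ} {B : Type*} [BooleanAlgebra B] (t : Fin n → B)
    (s : Finset (Fin n)) (x : B) :
    x ≤ s.powerset.sup
      (fun S => (x ⊓ S.inf t) ⊓ (s \ S).inf (fun i => (t i)ᶜ)) := by
  induction s using Finset.induction_on generalizing x with
  | empty => simp
  | @insert k s' hk ih =>
    have hx : x ≤ (x ⊓ t k) ⊔ (x ⊓ (t k)ᶜ) := by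
      rw [← inf_sup_left, sup_compl_eq_top, inf_top_eq]
    refine hx.trans (sup_le ?_ ?_)
    · refine (ih (x ⊓ t k)).trans (Finset.sup_le fun S hS => ?_)
      rw [Finset.mem_powerset] at hS
      have hmem : insert k S ∈ (insert k s').powerset := by
        rw [Finset.mem_powerset]
        exact Finset.insert_subset_insert k hS
      refine le_trans ?_ (Finset.le_sup hmem)
      have hkS : k ∉ S := fun h => hk (hS h)
      have h1 : (insert k S).inf t = t k ⊓ S.inf t := Finset.inf_insert
      have h2 : insert k s' \ insert k S = s' \ S := by
        ext i
        simp only [Finset.mem_sdiff, Finset.mem_insert]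
        constructor
        · rintro ⟨hi | hi, hni⟩
          · exact absurd (Or.inl hi) hni
          · exact ⟨hi, fun h => hni (Or.inr h)⟩
        · rintro ⟨hi, hni⟩
          refine ⟨Or.inr hi, ?_⟩
          rintro (rfl | h)
          · exact hk hi
          · exact hni h
      rw [h1, h2]
      exact le_of_eq (by ac_rfl)
    · refine (ih (x ⊓ (t k)ᶜ)).trans (Finset.sup_le fun S hS => ?_)
      rw [Finset.mem_powerset] at hS
      have hmem : S ∈ (insert k s').powerset := by
        rw [Finset.mem_powerset]
        exact hS.trans (Finset.subset_insert k s')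
      refine le_trans ?_ (Finset.le_sup hmem)
      have hkS : k ∉ S := fun h => hk (hS h)
      have h2 : insert k s' \ S = insert k (s' \ S) := by
        rw [Finset.insert_sdiff_of_notMem _ hkS]
      rw [h2, Finset.inf_insert]
      exact le_of_eq (by ac_rfl)

/-- Iterating the second half of (★): meeting with `⋀_{i∈D} (b i)ᶜ` lets us
remove `D` from the index set. -/
lemma remove_set {n : ℕ} {B : Type*} [BooleanAlgebra B] (a b : Fin n → B)
    (f : (Fin n → B) → B)
    (hstar2 : ∀ (I : Finset (Fin n)) (k : Fin n),
      f (eVec a b I) ≤ f (eVec a b (I.erase k)) ⊔ b k)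
    (D : Finset (Fin n)) :
    ∀ J : Finset (Fin n),
      f (eVec a b J) ⊓ D.inf (fun i => (b i)ᶜ) ≤ f (eVec a b (J \ D)) := by
  induction D using Finset.induction_on with
  | empty => simp
  | @insert k D' hk ih =>
    intro J
    rw [Finset.inf_insert, ← inf_assoc]
    have h1 : f (eVec a b J) ⊓ (b k)ᶜ ≤ f (eVec a b (J.erase k)) := by
      calc f (eVec a b J) ⊓ (b k)ᶜ
          ≤ (f (eVec a b (J.erase k)) ⊔ b k) ⊓ (b k)ᶜ :=
            inf_le_inf_right _ (hstar2 J k)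
        _ ≤ f (eVec a b (J.erase k)) := by
            rw [inf_sup_right]
            simp
    calc f (eVec a b J) ⊓ (b k)ᶜ ⊓ D'.inf (fun i => (b i)ᶜ)
        ≤ f (eVec a b (J.erase k)) ⊓ D'.inf (fun i => (b i)ᶜ) :=
          inf_le_inf_right _ h1
      _ ≤ f (eVec a b (J.erase k \ D')) := ih _
      _ = f (eVec a b (J \ insert k D')) := by
          rw [Finset.erase_sdiff_comm, Finset.sdiff_insert]

/-- estimating `p⁻`: with `c_I⁻ = f(ê_I) ∧ ⋀_{i∉I} aᵢ'` and
`p⁻(x) = ⋁_I (c_I⁻ ∧ ⋀_{i∈I} x_i)`, if `f` is monotone and satisfies (★) then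
`p⁻(ê_J) ≥ f(ê_J)` for all `J`. -/
theorem stmt_10 {n : ℕ} {B : Type*} [BooleanAlgebra B] (L : Sublattice B)
    (a b : Fin n → B) (haL : ∀ i, a i ∈ L) (hbL : ∀ i, b i ∈ L)
    (hab : ∀ i, a i < b i)
    (f : (Fin n → B) → B) (hfL : ∀ I : Finset (Fin n), f (eVec a b I) ∈ L)
    (hmono : ∀ I J : Finset (Fin n), I ⊆ J → f (eVec a b I) ≤ f (eVec a b J))
    (hstar : ∀ (I : Finset (Fin n)) (k : Fin n),
      f (eVec a b (insert k I)) ⊓ a k ≤ f (eVec a b I) ∧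
        f (eVec a b I) ≤ f (eVec a b (I.erase k)) ⊔ b k)
    (J : Finset (Fin n)) :
    f (eVec a b J) ≤
      (Finset.univ.powerset).sup
        (fun I : Finset (Fin n) =>
          (f (eVec a b I) ⊓ (Finset.univ \ I).inf (fun i => (a i)ᶜ)) ⊓ I.inf (eVec a b J)) := by
  set t : Fin n → B := eVec a b J with ht
  refine (sup_decomp t Finset.univ (f (eVec a b J))).trans (Finset.sup_le fun S hS => ?_)
  refine le_trans ?_ (Finset.le_sup (show S ∈ Finset.univ.powerset by simp))
  -- Key inequality 1: f(ê_J) ⊓ ⋀_{i∉S} (t i)ᶜ ≤ f(ê_S)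
  have h1 : f (eVec a b J) ⊓ (Finset.univ \ S).inf (fun i => (t i)ᶜ) ≤ f (eVec a b S) := by
    have hsub : J \ S ⊆ Finset.univ \ S := by
      intro i hi
      rw [Finset.mem_sdiff] at hi ⊢
      exact ⟨Finset.mem_univ i, hi.2⟩
    have hstep : (Finset.univ \ S).inf (fun i => (t i)ᶜ)
        ≤ (J \ S).inf (fun i => (b i)ᶜ) := by
      refine le_trans (Finset.inf_mono hsub) (le_of_eq ?_)
      refine Finset.inf_congr rfl fun i hi => ?_
      rw [Finset.mem_sdiff] at hi
      simp [ht, eVec, hi.1]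
    calc f (eVec a b J) ⊓ (Finset.univ \ S).inf (fun i => (t i)ᶜ)
        ≤ f (eVec a b J) ⊓ (J \ S).inf (fun i => (b i)ᶜ) := inf_le_inf_left _ hstep
      _ ≤ f (eVec a b (J \ (J \ S))) :=
          remove_set a b f (fun I k => (hstar I k).2) (J \ S) J
      _ ≤ f (eVec a b S) := by
          refine hmono _ _ ?_
          intro i hi
          simp only [Finset.mem_sdiff, not_and, not_not] at hi
          exact hi.2 hi.1
  -- Key inequality 2: ⋀_{i∉S} (t i)ᶜ ≤ ⋀_{i∉S} (a i)ᶜ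
  have h2 : (Finset.univ \ S).inf (fun i => (t i)ᶜ)
      ≤ (Finset.univ \ S).inf (fun i => (a i)ᶜ) := by
    refine Finset.inf_mono_fun fun i _ => ?_
    refine compl_le_compl ?_
    by_cases hi : i ∈ J <;> simp [ht, eVec, hi, (hab i).le]
  refine le_inf (le_inf ?_ ?_) ?_
  · exact le_trans (inf_le_inf_right _ inf_le_left) h1
  · exact le_trans inf_le_right h2
  · exact le_trans inf_le_left inf_le_right
end

section
/- (Coefficient bounds from interpolation, (i) ⟹ (ii)) Let B be a Boolean algebra, L ⊆ B a sublattice, a_i < b_i in L, and f: {ê_I} → L. Suppose p(x) = ⋁_{I ⊆ [n]} (c_I ∧ ⋀_{i∈I} x_i) is a polynomial function over B with monotone coefficients c_I ∈ B satisfying p(ê_J) = f(ê_J) for all J ⊆ [n]. Then c_I^- ≤ c_I ≤ c_I^+ for all I ⊆ [n], where c_I^- = f(ê_I) ∧ ⋀_{i∉I} a_i' and c_I^+ = f(ê_I) ∨ ⋁_{i∈I} b_i'. -/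
/-- (i) ⟹ (ii): if a DNF polynomial over `B` with monotone coefficients
`c_I` interpolates `f` on all `ê_J`, then `c_I⁻ ≤ c_I ≤ c_I⁺` for all `I`. -/
theorem stmt_12 {n : ℕ} {B : Type*} [BooleanAlgebra B] (L : Sublattice B)
    (a b : Fin n → B) (haL : ∀ i, a i ∈ L) (hbL : ∀ i, b i ∈ L)
    (hab : ∀ i, a i < b i)
    (f : (Fin n → B) → B) (hfL : ∀ I : Finset (Fin n), f (eVec a b I) ∈ L)
    (c : Finset (Fin n) → B) (hc : ∀ I J : Finset (Fin n), I ⊆ J → c I ≤ c J)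
    (hint : ∀ J : Finset (Fin n),
      (Finset.univ.powerset).sup
          (fun I : Finset (Fin n) => c I ⊓ I.inf (eVec a b J)) = f (eVec a b J)) :
    ∀ I : Finset (Fin n),
      f (eVec a b I) ⊓ (Finset.univ \ I).inf (fun i => (a i)ᶜ) ≤ c I ∧
        c I ≤ f (eVec a b I) ⊔ I.sup (fun i => (b i)ᶜ) := by
  intro I
  have hIinf : I.inf (eVec a b I) = I.inf b :=
    Finset.inf_congr rfl (fun i hi => by simp [eVec, hi])
  constructor
  · -- lower bound
    rw [← hint I, Finset.sup_inf_distrib_right]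
    apply Finset.sup_le
    intro J _
    by_cases hJI : J ⊆ I
    · exact le_trans inf_le_left (le_trans inf_le_left (hc J I hJI))
    · obtain ⟨i, hiJ, hiI⟩ := Finset.not_subset.mp hJI
      have h1 : J.inf (eVec a b I) ≤ a i := by
        have := Finset.inf_le (f := eVec a b I) hiJ
        simpa [eVec, hiI] using this
      have h2 : (Finset.univ \ I).inf (fun i => (a i)ᶜ) ≤ (a i)ᶜ :=
        Finset.inf_le (by simp [hiI])
      calc c J ⊓ J.inf (eVec a b I) ⊓ (Finset.univ \ I).inf (fun i => (a i)ᶜ)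
          ≤ a i ⊓ (a i)ᶜ :=
            inf_le_inf (le_trans inf_le_right h1) h2
        _ = ⊥ := inf_compl_eq_bot
        _ ≤ c I := bot_le
  · -- upper bound
    have hterm : c I ⊓ I.inf b ≤ f (eVec a b I) := by
      rw [← hint I, ← hIinf]
      exact Finset.le_sup (f := fun J : Finset (Fin n) => c J ⊓ J.inf (eVec a b I)) (Finset.mem_powerset.mpr (Finset.subset_univ I))
    calc c I = c I ⊓ I.inf b ⊔ c I ⊓ (I.inf b)ᶜ := by
          rw [← inf_sup_left, sup_compl_eq_top, inf_top_eq]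
      _ ≤ f (eVec a b I) ⊔ (I.inf b)ᶜ :=
          sup_le_sup hterm inf_le_right
      _ = f (eVec a b I) ⊔ I.sup (fun i => (b i)ᶜ) := by
          rw [Finset.compl_inf]
end

section
/- (Equivalence for solutions over B) Let B be a Boolean algebra, L ⊆ B a sublattice, a_i < b_i in L, D = {ê_I : I ⊆ [n]}, and f: D → L monotone and satisfying (★). For a polynomial function p over B given by monotone coefficients c_I ∈ B, the following are equivalent: (i) p(ê_J) = f(ê_J) for all J; (ii) c_I^- ≤ c_I ≤ c_I^+ for all I; (iii) p^-(x) ≤ p(x) ≤ p^+(x) for all x ∈ L^n, where p^± are the polynomial functions with coefficients c_I^±. -/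
/-- The DNF polynomial function determined by a system of coefficients. -/
def dnf {n : ℕ} {B : Type*} [Lattice B] [BoundedOrder B]
    (c : Finset (Fin n) → B) (x : Fin n → B) : B :=
  (Finset.univ.powerset).sup fun I : Finset (Fin n) => c I ⊓ I.inf x

section Helpers

variable {n : ℕ} {B : Type*} [BooleanAlgebra B] {a b : Fin n → B}

private lemma dnf_mono_coeff {c d : Finset (Fin n) → B} (h : ∀ I, c I ≤ d I) (x : Fin n → B) :
    dnf c x ≤ dnf d x :=
  Finset.sup_mono_fun fun I _ => inf_le_inf_right _ (h I)

/-- Removing indices via meets with `a k`, by iterating the lower half of (★). -/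
private lemma removal_a (f : (Fin n → B) → B)
    (hmono : ∀ I J : Finset (Fin n), I ⊆ J → f (eVec a b I) ≤ f (eVec a b J))
    (hstar1 : ∀ (I : Finset (Fin n)) (k : Fin n),
      f (eVec a b (insert k I)) ⊓ a k ≤ f (eVec a b I))
    (K : Finset (Fin n)) :
    ∀ I : Finset (Fin n), f (eVec a b I) ⊓ K.inf a ≤ f (eVec a b (I \ K)) := by
  induction K using Finset.induction with
  | empty => intro I; simp
  | @insert k K hk ih =>
    intro I
    have h1 : f (eVec a b I) ⊓ a k ≤ f (eVec a b (I.erase k)) := by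
      refine le_trans (inf_le_inf_right _ (hmono I (insert k (I.erase k)) ?_))
        (hstar1 (I.erase k) k)
      intro x hx
      by_cases hxk : x = k <;> simp [hxk, Finset.mem_insert, Finset.mem_erase, hx]
    have hset : I.erase k \ K = I \ insert k K := by
      ext x; simp [Finset.mem_erase, Finset.mem_sdiff, Finset.mem_insert]; tauto
    calc f (eVec a b I) ⊓ (insert k K).inf a
        = f (eVec a b I) ⊓ a k ⊓ K.inf a := by rw [Finset.inf_insert, inf_assoc]
      _ ≤ f (eVec a b (I.erase k)) ⊓ K.inf a := inf_le_inf_right _ h1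
      _ ≤ f (eVec a b (I.erase k \ K)) := ih _
      _ = f (eVec a b (I \ insert k K)) := by rw [hset]

/-- Removing indices via meets with `(b k)ᶜ`, by iterating the upper half of (★). -/
private lemma removal_b (f : (Fin n → B) → B)
    (hstar2 : ∀ (I : Finset (Fin n)) (k : Fin n),
      f (eVec a b I) ≤ f (eVec a b (I.erase k)) ⊔ b k)
    (K : Finset (Fin n)) :
    ∀ I : Finset (Fin n), f (eVec a b I) ⊓ K.inf (fun i => (b i)ᶜ) ≤ f (eVec a b (I \ K)) := by
  induction K using Finset.induction with
  | empty => intro I; simp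
  | @insert k K hk ih =>
    intro I
    have h1 : f (eVec a b I) ⊓ (b k)ᶜ ≤ f (eVec a b (I.erase k)) := by
      calc f (eVec a b I) ⊓ (b k)ᶜ
          ≤ (f (eVec a b (I.erase k)) ⊔ b k) ⊓ (b k)ᶜ := inf_le_inf_right _ (hstar2 I k)
        _ ≤ f (eVec a b (I.erase k)) := by simp [inf_sup_right]
    have hset : I.erase k \ K = I \ insert k K := by
      ext x; simp [Finset.mem_erase, Finset.mem_sdiff, Finset.mem_insert]; tauto
    calc f (eVec a b I) ⊓ (insert k K).inf (fun i => (b i)ᶜ)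
        = f (eVec a b I) ⊓ (b k)ᶜ ⊓ K.inf (fun i => (b i)ᶜ) := by
          rw [Finset.inf_insert, inf_assoc]
      _ ≤ f (eVec a b (I.erase k)) ⊓ K.inf (fun i => (b i)ᶜ) := inf_le_inf_right _ h1
      _ ≤ f (eVec a b (I.erase k \ K)) := ih _
      _ = f (eVec a b (I \ insert k K)) := by rw [hset]

/-- Atom-expansion in a Boolean algebra. -/
private lemma expand (u : Fin n → B) (F : Finset (Fin n)) :
    ∀ t : B, t ≤ F.powerset.sup
      (fun S => t ⊓ S.inf u ⊓ (F \ S).inf (fun i => (u i)ᶜ)) := by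
  induction F using Finset.induction with
  | empty => intro t; simp
  | @insert j F hj ih =>
    intro t
    have h1 : t ⊓ u j ≤ (insert j F).powerset.sup
        (fun S => t ⊓ S.inf u ⊓ ((insert j F) \ S).inf (fun i => (u i)ᶜ)) := by
      refine le_trans (ih (t ⊓ u j)) (Finset.sup_le fun S hS => ?_)
      have hSF : S ⊆ F := Finset.mem_powerset.mp hS
      have hmem : insert j S ∈ (insert j F).powerset :=
        Finset.mem_powerset.mpr (Finset.insert_subset_insert _ hSF)
      refine le_trans (le_of_eq ?_) (Finset.le_sup hmem)
      have hset : (insert j F) \ insert j S = F \ S := by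
        ext x
        simp only [Finset.mem_sdiff, Finset.mem_insert]
        constructor
        · rintro ⟨hx1 | hx1, hx2⟩
          · exact absurd (Or.inl hx1) hx2
          · exact ⟨hx1, fun hxS => hx2 (Or.inr hxS)⟩
        · rintro ⟨hx1, hx2⟩
          exact ⟨Or.inr hx1, by rintro (rfl | hxS); exacts [hj hx1, hx2 hxS]⟩
      rw [hset, Finset.inf_insert]
      ac_rfl
    have h2 : t ⊓ (u j)ᶜ ≤ (insert j F).powerset.sup
        (fun S => t ⊓ S.inf u ⊓ ((insert j F) \ S).inf (fun i => (u i)ᶜ)) := by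
      refine le_trans (ih (t ⊓ (u j)ᶜ)) (Finset.sup_le fun S hS => ?_)
      have hSF : S ⊆ F := Finset.mem_powerset.mp hS
      have hjS : j ∉ S := fun h => hj (hSF h)
      have hmem : S ∈ (insert j F).powerset :=
        Finset.mem_powerset.mpr (hSF.trans (Finset.subset_insert _ _))
      refine le_trans (le_of_eq ?_) (Finset.le_sup hmem)
      have hset : (insert j F) \ S = insert j (F \ S) := by
        ext x
        simp only [Finset.mem_sdiff, Finset.mem_insert]
        constructor
        · rintro ⟨rfl | hx1, hx2⟩
          · exact Or.inl rfl
          · exact Or.inr ⟨hx1, hx2⟩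
        · rintro (rfl | ⟨hx1, hx2⟩)
          · exact ⟨Or.inl rfl, hjS⟩
          · exact ⟨Or.inr hx1, hx2⟩
      rw [hset, Finset.inf_insert]
      ac_rfl
    calc t = (t ⊓ u j) ⊔ (t ⊓ (u j)ᶜ) := by
          rw [← inf_sup_left, sup_compl_eq_top, inf_top_eq]
      _ ≤ _ := sup_le h1 h2

/-- The generic term bound: `f(ê_I) ⊓ ⋀_{i∈I} ê_J(i) ≤ f(ê_J)`. -/
private lemma term_le (f : (Fin n → B) → B)
    (hmono : ∀ I J : Finset (Fin n), I ⊆ J → f (eVec a b I) ≤ f (eVec a b J))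
    (hstar1 : ∀ (I : Finset (Fin n)) (k : Fin n),
      f (eVec a b (insert k I)) ⊓ a k ≤ f (eVec a b I))
    (I J : Finset (Fin n)) :
    f (eVec a b I) ⊓ I.inf (eVec a b J) ≤ f (eVec a b J) := by
  have h1 : I.inf (eVec a b J) ≤ (I \ J).inf a := by
    refine le_trans (Finset.inf_mono Finset.sdiff_subset) (le_of_eq (Finset.inf_congr rfl ?_))
    intro i hi
    simp [eVec, (Finset.mem_sdiff.mp hi).2]
  calc f (eVec a b I) ⊓ I.inf (eVec a b J)
      ≤ f (eVec a b I) ⊓ (I \ J).inf a := inf_le_inf_left _ h1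
    _ ≤ f (eVec a b (I \ (I \ J))) := removal_a f hmono hstar1 _ I
    _ ≤ f (eVec a b J) := by
        refine hmono _ _ ?_
        rw [Finset.sdiff_sdiff_self_left]
        exact Finset.inter_subset_right

/-- The lower extremal coefficients interpolate `f` on `D`. -/
private lemma keyA (hab : ∀ i, a i ≤ b i) (f : (Fin n → B) → B)
    (hmono : ∀ I J : Finset (Fin n), I ⊆ J → f (eVec a b I) ≤ f (eVec a b J))
    (hstar1 : ∀ (I : Finset (Fin n)) (k : Fin n),
      f (eVec a b (insert k I)) ⊓ a k ≤ f (eVec a b I))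
    (hstar2 : ∀ (I : Finset (Fin n)) (k : Fin n),
      f (eVec a b I) ≤ f (eVec a b (I.erase k)) ⊔ b k)
    (J : Finset (Fin n)) :
    dnf (fun I => f (eVec a b I) ⊓ (Finset.univ \ I).inf (fun i => (a i)ᶜ)) (eVec a b J)
      = f (eVec a b J) := by
  apply le_antisymm
  · refine Finset.sup_le fun I _ => ?_
    calc f (eVec a b I) ⊓ (Finset.univ \ I).inf (fun i => (a i)ᶜ) ⊓ I.inf (eVec a b J)
        ≤ f (eVec a b I) ⊓ I.inf (eVec a b J) :=
          inf_le_inf_right _ inf_le_left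
      _ ≤ f (eVec a b J) := term_le f hmono hstar1 I J
  · refine le_trans (expand (eVec a b J) Finset.univ (f (eVec a b J)))
      (Finset.sup_le fun S hS => ?_)
    refine le_trans ?_ (Finset.le_sup hS)
    have hA : (Finset.univ \ S).inf (fun i => (eVec a b J i)ᶜ)
        ≤ (Finset.univ \ S).inf (fun i => (a i)ᶜ) := by
      refine Finset.inf_mono_fun fun i _ => compl_le_compl ?_
      unfold eVec; split
      · exact hab i
      · exact le_rfl
    have hB : f (eVec a b J) ⊓ (Finset.univ \ S).inf (fun i => (eVec a b J i)ᶜ)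
        ≤ f (eVec a b S) := by
      have h1 : (Finset.univ \ S).inf (fun i => (eVec a b J i)ᶜ)
          ≤ (J \ S).inf (fun i => (b i)ᶜ) := by
        refine le_trans (Finset.inf_mono ?_) (le_of_eq (Finset.inf_congr rfl ?_))
        · intro x hx
          simp only [Finset.mem_sdiff, Finset.mem_univ, true_and]
          exact (Finset.mem_sdiff.mp hx).2
        · intro i hi
          simp [eVec, (Finset.mem_sdiff.mp hi).1]
      calc f (eVec a b J) ⊓ (Finset.univ \ S).inf (fun i => (eVec a b J i)ᶜ)
          ≤ f (eVec a b J) ⊓ (J \ S).inf (fun i => (b i)ᶜ) := inf_le_inf_left _ h1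
        _ ≤ f (eVec a b (J \ (J \ S))) := removal_b f hstar2 _ J
        _ ≤ f (eVec a b S) := by
            refine hmono _ _ ?_
            rw [Finset.sdiff_sdiff_self_left]
            exact Finset.inter_subset_right
    refine le_inf (le_inf ?_ ?_) ?_
    · exact le_trans (le_inf (inf_le_of_left_le inf_le_left) inf_le_right) hB
    · exact le_trans inf_le_right hA
    · exact inf_le_of_left_le inf_le_right

/-- The upper extremal coefficients interpolate `f` on `D`. -/
private lemma keyB (hab : ∀ i, a i ≤ b i) (f : (Fin n → B) → B)
    (hmono : ∀ I J : Finset (Fin n), I ⊆ J → f (eVec a b I) ≤ f (eVec a b J))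
    (hstar1 : ∀ (I : Finset (Fin n)) (k : Fin n),
      f (eVec a b (insert k I)) ⊓ a k ≤ f (eVec a b I))
    (hstar2 : ∀ (I : Finset (Fin n)) (k : Fin n),
      f (eVec a b I) ≤ f (eVec a b (I.erase k)) ⊔ b k)
    (J : Finset (Fin n)) :
    dnf (fun I => f (eVec a b I) ⊔ I.sup (fun i => (b i)ᶜ)) (eVec a b J)
      = f (eVec a b J) := by
  apply le_antisymm
  · refine Finset.sup_le fun I _ => ?_
    rw [inf_sup_right]
    refine sup_le (term_le f hmono hstar1 I J) ?_
    rw [Finset.sup_inf_distrib_right]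
    refine Finset.sup_le fun k hk => ?_
    have h1 : I.inf (eVec a b J) ≤ b k := by
      refine le_trans (Finset.inf_le hk) ?_
      unfold eVec; split
      · exact le_rfl
      · exact hab k
    calc (b k)ᶜ ⊓ I.inf (eVec a b J) ≤ (b k)ᶜ ⊓ b k := inf_le_inf_left _ h1
      _ = ⊥ := by simp
      _ ≤ f (eVec a b J) := bot_le
  · calc f (eVec a b J)
        = dnf (fun I => f (eVec a b I) ⊓ (Finset.univ \ I).inf (fun i => (a i)ᶜ))
            (eVec a b J) := (keyA hab f hmono hstar1 hstar2 J).symm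
      _ ≤ _ := Finset.sup_mono_fun fun I _ =>
          inf_le_inf_right _ (le_trans inf_le_left le_sup_left)

end Helpers

/-- all solutions over `B`: for `f` monotone satisfying (★) and a DNF
polynomial `p` over `B` with monotone coefficients `c_I`, the conditions
(i) `p|_D = f`, (ii) `c_I⁻ ≤ c_I ≤ c_I⁺` for all `I`, and
(iii) `p⁻(x) ≤ p(x) ≤ p⁺(x)` for all `x ∈ L^n`, are equivalent. -/
theorem stmt_13 {n : ℕ} {B : Type*} [BooleanAlgebra B] (L : Sublattice B)
    (a b : Fin n → B) (haL : ∀ i, a i ∈ L) (hbL : ∀ i, b i ∈ L)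
    (hab : ∀ i, a i < b i)
    (f : (Fin n → B) → B) (hfL : ∀ I : Finset (Fin n), f (eVec a b I) ∈ L)
    (hmono : ∀ I J : Finset (Fin n), I ⊆ J → f (eVec a b I) ≤ f (eVec a b J))
    (hstar : ∀ (I : Finset (Fin n)) (k : Fin n),
      f (eVec a b (insert k I)) ⊓ a k ≤ f (eVec a b I) ∧
        f (eVec a b I) ≤ f (eVec a b (I.erase k)) ⊔ b k)
    (c : Finset (Fin n) → B) (hc : ∀ I J : Finset (Fin n), I ⊆ J → c I ≤ c J) :
    ((∀ J : Finset (Fin n), dnf c (eVec a b J) = f (eVec a b J)) ↔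
      (∀ I : Finset (Fin n),
        f (eVec a b I) ⊓ (Finset.univ \ I).inf (fun i => (a i)ᶜ) ≤ c I ∧
          c I ≤ f (eVec a b I) ⊔ I.sup (fun i => (b i)ᶜ))) ∧
    ((∀ I : Finset (Fin n),
        f (eVec a b I) ⊓ (Finset.univ \ I).inf (fun i => (a i)ᶜ) ≤ c I ∧
          c I ≤ f (eVec a b I) ⊔ I.sup (fun i => (b i)ᶜ)) ↔
      (∀ x : Fin n → B, (∀ i, x i ∈ L) →
        dnf (fun I => f (eVec a b I) ⊓ (Finset.univ \ I).inf (fun i => (a i)ᶜ)) x ≤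
            dnf c x ∧
          dnf c x ≤ dnf (fun I => f (eVec a b I) ⊔ I.sup (fun i => (b i)ᶜ)) x)) := by
  have hab' : ∀ i, a i ≤ b i := fun i => (hab i).le
  have hstar1 : ∀ (I : Finset (Fin n)) (k : Fin n),
      f (eVec a b (insert k I)) ⊓ a k ≤ f (eVec a b I) := fun I k => (hstar I k).1
  have hstar2 : ∀ (I : Finset (Fin n)) (k : Fin n),
      f (eVec a b I) ≤ f (eVec a b (I.erase k)) ⊔ b k := fun I k => (hstar I k).2
  have hA := keyA hab' f hmono hstar1 hstar2
  have hB := keyB hab' f hmono hstar1 hstar2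
  have hiff1 : (∀ J : Finset (Fin n), dnf c (eVec a b J) = f (eVec a b J)) ↔
      (∀ I : Finset (Fin n),
        f (eVec a b I) ⊓ (Finset.univ \ I).inf (fun i => (a i)ᶜ) ≤ c I ∧
          c I ≤ f (eVec a b I) ⊔ I.sup (fun i => (b i)ᶜ)) := by
    constructor
    · intro h I
      constructor
      · -- lower bound: c_I⁻ ≤ c_I
        rw [← h I]
        unfold dnf
        rw [Finset.sup_inf_distrib_right]
        refine Finset.sup_le fun K _ => ?_
        by_cases hKI : K ⊆ I
        · exact le_trans (inf_le_of_left_le inf_le_left) (hc _ _ hKI)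
        · obtain ⟨k, hkK, hkI⟩ := Finset.not_subset.mp hKI
          have h1 : K.inf (eVec a b I) ≤ a k :=
            le_trans (Finset.inf_le hkK) (le_of_eq (if_neg hkI))
          have h2 : (Finset.univ \ I).inf (fun i => (a i)ᶜ) ≤ (a k)ᶜ :=
            Finset.inf_le (by simp [hkI])
          calc c K ⊓ K.inf (eVec a b I) ⊓ (Finset.univ \ I).inf (fun i => (a i)ᶜ)
              ≤ a k ⊓ (a k)ᶜ := inf_le_inf (inf_le_of_right_le h1) h2
            _ = ⊥ := by simp
            _ ≤ c I := bot_le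
      · -- upper bound: c_I ≤ c_I⁺
        rw [← compl_compl (I.sup fun i => (b i)ᶜ), ← himp_eq, le_himp_iff,
          Finset.compl_sup]
        simp only [compl_compl]
        have h1 : I.inf b = I.inf (eVec a b I) :=
          Finset.inf_congr rfl fun i hi => (if_pos hi).symm
        rw [h1, ← h I]
        unfold dnf
        exact Finset.le_sup (f := fun K : Finset (Fin n) => c K ⊓ K.inf (eVec a b I))
          (Finset.mem_powerset.mpr (Finset.subset_univ I))
    · intro h J
      refine le_antisymm ?_ ?_
      · calc dnf c (eVec a b J)
            ≤ dnf (fun I => f (eVec a b I) ⊔ I.sup (fun i => (b i)ᶜ)) (eVec a b J) :=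
              dnf_mono_coeff (fun I => (h I).2) _
          _ = f (eVec a b J) := hB J
      · calc f (eVec a b J)
            = dnf (fun I => f (eVec a b I) ⊓ (Finset.univ \ I).inf (fun i => (a i)ᶜ))
                (eVec a b J) := (hA J).symm
          _ ≤ dnf c (eVec a b J) := dnf_mono_coeff (fun I => (h I).1) _
  refine ⟨hiff1, ?_, ?_⟩
  · intro h x _
    exact ⟨dnf_mono_coeff (fun I => (h I).1) x, dnf_mono_coeff (fun I => (h I).2) x⟩
  · intro h
    refine hiff1.mp fun J => ?_
    obtain ⟨h1, h2⟩ := h (eVec a b J) (fun i => by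
      unfold eVec; split
      · exact hbL i
      · exact haL i)
    exact le_antisymm (h2.trans (hB J).le) ((hA J).ge.trans h1)
end

section
/- (Main theorem, sufficiency) Let B be a Boolean algebra, L ⊆ B a sublattice, a_i < b_i in L, and f defined on D = {ê_I : I ⊆ [n]} with values in L. If f is monotone and satisfies (★), then the polynomial function p_0(x) = ⋁_{I ⊆ [n]} (f(ê_I) ∧ ⋀_{i∈I} x_i), whose coefficients all lie in L, satisfies p_0(ê_J) = f(ê_J) for all J ⊆ [n]. -/
private lemma auxA {n : ℕ} {B : Type*} [BooleanAlgebra B]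
    (g : Finset (Fin n) → B) (a : Fin n → B)
    (hstar1 : ∀ I k, g (insert k I) ⊓ a k ≤ g I) :
    ∀ T I : Finset (Fin n), g I ⊓ T.inf a ≤ g (I \ T) := by
  intro T
  induction T using Finset.induction with
  | empty => intro I; simp
  | @insert t s ht ih =>
    intro I
    have h1 : g I ⊓ a t ≤ g (I.erase t) := by
      by_cases htI : t ∈ I
      · have := hstar1 (I.erase t) t
        rwa [Finset.insert_erase htI] at this
      · rw [Finset.erase_eq_of_notMem htI]; exact inf_le_left
    have h2 : I \ insert t s = (I.erase t) \ s := by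
      ext x; simp [Finset.mem_erase]; tauto
    calc g I ⊓ (insert t s).inf a = (g I ⊓ a t) ⊓ s.inf a := by
          rw [Finset.inf_insert, inf_assoc]
      _ ≤ g (I.erase t) ⊓ s.inf a := inf_le_inf_right _ h1
      _ ≤ g (I.erase t \ s) := ih _
      _ = g (I \ insert t s) := by rw [h2]

private lemma auxB {n : ℕ} {B : Type*} [BooleanAlgebra B]
    (g : Finset (Fin n) → B) (b : Fin n → B)
    (hstar2 : ∀ I k, g I ≤ g (I.erase k) ⊔ b k) :
    ∀ (m : ℕ) (J K : Finset (Fin n)), J.card = m → Disjoint J K →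
      g (J ∪ K) ⊓ K.inf b ≤ (J ∪ K).powerset.sup (fun I => g I ⊓ I.inf b) := by
  intro m
  induction m with
  | zero =>
    intro J K hcard _
    rw [Finset.card_eq_zero] at hcard
    subst hcard
    rw [Finset.empty_union]
    exact Finset.le_sup (f := fun I => g I ⊓ I.inf b) (Finset.mem_powerset.mpr Finset.Subset.rfl)
  | succ m ih =>
    intro J K hcard hdisj
    obtain ⟨k, hk⟩ : J.Nonempty := Finset.card_pos.mp (by omega)
    set J' := J.erase k with hJ'
    have hkK : k ∉ K := Finset.disjoint_left.mp hdisj hk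
    have hJ'card : J'.card = m := by simp [hJ', Finset.card_erase_of_mem hk, hcard]
    have hkJ' : k ∉ J' := Finset.notMem_erase k J
    have hdisj1 : Disjoint J' K := Finset.disjoint_of_subset_left (Finset.erase_subset k J) hdisj
    have hdisj2 : Disjoint J' (insert k K) := by
      rw [Finset.disjoint_insert_right]
      exact ⟨hkJ', hdisj1⟩
    have hU : J' ∪ insert k K = J ∪ K := by
      rw [hJ']; ext x; simp [Finset.mem_erase]
      constructor
      · rintro ((⟨_, h⟩) | h | h) <;> simp_all
      · rintro (h | h)
        · by_cases hx : x = k <;> simp_all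
        · tauto
    have herase : (J ∪ K).erase k = J' ∪ K := by
      rw [Finset.erase_union_distrib, ← hJ', Finset.erase_eq_of_notMem hkK]
    have hstep : g (J ∪ K) ≤ g (J' ∪ K) ⊔ b k := by
      have := hstar2 (J ∪ K) k
      rwa [herase] at this
    have key : g (J ∪ K) ⊓ K.inf b ≤
        (g (J' ∪ K) ⊓ K.inf b) ⊔ (g (J' ∪ insert k K) ⊓ (insert k K).inf b) := by
      calc g (J ∪ K) ⊓ K.inf b
          ≤ (g (J' ∪ K) ⊔ b k) ⊓ (g (J ∪ K) ⊓ K.inf b) :=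
            le_inf (le_trans inf_le_left hstep) le_rfl
        _ = (g (J' ∪ K) ⊓ (g (J ∪ K) ⊓ K.inf b)) ⊔ (b k ⊓ (g (J ∪ K) ⊓ K.inf b)) :=
            inf_sup_right _ _ _
        _ ≤ (g (J' ∪ K) ⊓ K.inf b) ⊔ (g (J' ∪ insert k K) ⊓ (insert k K).inf b) := by
            apply sup_le_sup
            · exact inf_le_inf_left _ inf_le_right
            · rw [hU, Finset.inf_insert]
              calc b k ⊓ (g (J ∪ K) ⊓ K.inf b) = g (J ∪ K) ⊓ (b k ⊓ K.inf b) := by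
                    rw [inf_left_comm]
                _ ≤ g (J ∪ K) ⊓ (b k ⊓ K.inf b) := le_rfl
    refine key.trans (sup_le ?_ ?_)
    · exact (ih J' K hJ'card hdisj1).trans
        (Finset.sup_mono (Finset.powerset_mono.mpr
          (Finset.union_subset_union (Finset.erase_subset k J) Finset.Subset.rfl)))
    · exact (ih J' (insert k K) hJ'card hdisj2).trans
        (by rw [hU])

/-- main theorem, sufficiency: if `f` is monotone and satisfies (★),
then the polynomial `p₀(x) = ⋁_I (f(ê_I) ∧ ⋀_{i∈I} x_i)`, whose coefficients all lie
in `L`, interpolates `f` on all cuboid vertices. -/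
theorem stmt_14 {n : ℕ} {B : Type*} [BooleanAlgebra B] (L : Sublattice B)
    (a b : Fin n → B) (haL : ∀ i, a i ∈ L) (hbL : ∀ i, b i ∈ L)
    (hab : ∀ i, a i < b i)
    (f : (Fin n → B) → B) (hfL : ∀ I : Finset (Fin n), f (eVec a b I) ∈ L)
    (hmono : ∀ I J : Finset (Fin n), I ⊆ J → f (eVec a b I) ≤ f (eVec a b J))
    (hstar : ∀ (I : Finset (Fin n)) (k : Fin n),
      f (eVec a b (insert k I)) ⊓ a k ≤ f (eVec a b I) ∧
        f (eVec a b I) ≤ f (eVec a b (I.erase k)) ⊔ b k) :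
    ∀ J : Finset (Fin n),
      (Finset.univ.powerset).sup
          (fun I : Finset (Fin n) => f (eVec a b I) ⊓ I.inf (eVec a b J)) =
        f (eVec a b J) := by
  intro J
  set g : Finset (Fin n) → B := fun I => f (eVec a b I) with hg
  apply le_antisymm
  · -- upper bound
    apply Finset.sup_le
    intro I _
    have h1 : I.inf (eVec a b J) ≤ (I \ J).inf a := by
      calc I.inf (eVec a b J) ≤ (I \ J).inf (eVec a b J) :=
            Finset.inf_mono Finset.sdiff_subset
        _ = (I \ J).inf a := Finset.inf_congr rfl (fun i hi => by
            simp [eVec, (Finset.mem_sdiff.mp hi).2])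
    calc g I ⊓ I.inf (eVec a b J) ≤ g I ⊓ (I \ J).inf a := inf_le_inf_left _ h1
      _ ≤ g (I \ (I \ J)) := auxA g a (fun I k => (hstar I k).1) _ _
      _ = g (I ∩ J) := by rw [Finset.sdiff_sdiff_self_left]
      _ ≤ g J := hmono _ _ Finset.inter_subset_right
  · -- lower bound
    have hB := auxB g b (fun I k => (hstar I k).2) J.card J ∅ rfl (Finset.disjoint_empty_right J)
    rw [Finset.union_empty, Finset.inf_empty, inf_top_eq] at hB
    refine hB.trans (Finset.sup_le ?_)
    intro I hI
    rw [Finset.mem_powerset] at hI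
    have : I.inf b = I.inf (eVec a b J) := Finset.inf_congr rfl (fun i hi => by
      simp [eVec, hI hi])
    rw [this]
    exact Finset.le_sup (f := fun I : Finset (Fin n) => f (eVec a b I) ⊓ I.inf (eVec a b J))
      (Finset.mem_powerset.mpr (Finset.subset_univ I))
end

section
/- (Complete lattice version) Let L be a complete distributive sublattice of a Boolean algebra B (closed under the relevant meets/joins), with a_i < b_i, D = {ê_I}, and f: D → L monotone satisfying (★). Define cl(x) = ⋀{a ∈ L : a ≥ x} and int(x) = ⋁{a ∈ L : a ≤ x} for x ∈ B. Then a polynomial function p over L with monotone coefficients c_I ∈ L satisfies p|_D = f if and only if cl(c_I^-) ≤ c_I ≤ int(c_I^+) for all I ⊆ [n]. -/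
open Finset

section Closure
variable {α : Type*} [CompleteLattice α] {L : Set α} {x y : α}

theorem sInf_sep_le_iff (hx : x ∈ L) : sInf {z ∈ L | y ≤ z} ≤ x ↔ y ≤ x :=
  ⟨fun h => (le_sInf fun _ hz => hz.2).trans h, fun h => sInf_le ⟨hx, h⟩⟩

theorem le_sSup_sep_iff (hx : x ∈ L) : x ≤ sSup {z ∈ L | z ≤ y} ↔ x ≤ y :=
  ⟨fun h => h.trans (sSup_le fun _ hz => hz.2), fun h => le_sSup ⟨hx, h⟩⟩

end Closure

section Finset
variable {α ι : Type*} [DecidableEq ι]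

theorem Finset.sup_powerset_inf_inf_compl [BooleanAlgebra α] (s : Finset ι) (u : ι → α) :
    (s.powerset.sup fun T => T.inf u ⊓ (s \ T).inf fun i => (u i)ᶜ) = ⊤ := by
  induction s using Finset.induction_on with
  | empty => simp
  | @insert k s hk ih =>
    have hout : ∀ T ∈ s.powerset, T.inf u ⊓ (insert k s \ T).inf (fun i => (u i)ᶜ) =
        (T.inf u ⊓ (s \ T).inf fun i => (u i)ᶜ) ⊓ (u k)ᶜ := by
      intro T hT
      rw [insert_sdiff_of_notMem _ fun h => hk (mem_powerset.1 hT h), inf_insert, inf_left_comm,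
        inf_comm]
    have hin : ∀ T ∈ s.powerset,
        (insert k T).inf u ⊓ (insert k s \ insert k T).inf (fun i => (u i)ᶜ) =
          (T.inf u ⊓ (s \ T).inf fun i => (u i)ᶜ) ⊓ u k := by
      intro T _
      rw [insert_sdiff_insert, sdiff_insert_of_notMem hk, inf_insert, inf_assoc, inf_comm]
    rw [powerset_insert, sup_union, sup_image, sup_congr rfl hout, Function.comp_def,
      sup_congr rfl hin, ← sup_inf_distrib_right, ← sup_inf_distrib_right, ← inf_sup_left, ih,
      compl_sup_eq_top, inf_top_eq]

variable [SemilatticeInf α] {g : Finset ι → α} {w : ι → α}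

theorem inf_le_erase_of_inf_le_insert (h : ∀ I k, g (insert k I) ⊓ w k ≤ g I) (I : Finset ι)
    (k : ι) : g I ⊓ w k ≤ g (I.erase k) := by
  by_cases hk : k ∈ I
  · conv_lhs => rw [← insert_erase hk]
    exact h _ k
  · rw [erase_eq_of_notMem hk]
    exact inf_le_left

theorem inf_inf_le_sdiff [OrderTop α] (h : ∀ I k, g I ⊓ w k ≤ g (I.erase k))
    (I T : Finset ι) : g I ⊓ T.inf w ≤ g (I \ T) := by
  induction T using Finset.induction_on with
  | empty => simp
  | @insert k T _ ih =>
    calc g I ⊓ (insert k T).inf w = g I ⊓ T.inf w ⊓ w k := by rw [inf_insert]; ac_rfl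
      _ ≤ g (I \ T) ⊓ w k := inf_le_inf_right _ ih
      _ ≤ g ((I \ T).erase k) := h _ k
      _ = g (I \ insert k T) := by rw [sdiff_insert]

end Finset

section Interpolation
variable {n : ℕ} {B : Type*}

theorem eVec_of_mem (a b : Fin n → B) {I : Finset (Fin n)} {i : Fin n} (hi : i ∈ I) :
    eVec a b I i = b i :=
  if_pos hi

theorem eVec_of_notMem (a b : Fin n → B) {I : Finset (Fin n)} {i : Fin n} (hi : i ∉ I) :
    eVec a b I i = a i :=
  if_neg hi

theorem le_eVec [Preorder B] {a b : Fin n → B} (hab : ∀ i, a i ≤ b i) (I : Finset (Fin n))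
    (i : Fin n) : a i ≤ eVec a b I i := by
  unfold eVec
  split_ifs
  exacts [hab i, le_rfl]

theorem eVec_le [Preorder B] {a b : Fin n → B} (hab : ∀ i, a i ≤ b i) (I : Finset (Fin n))
    (i : Fin n) : eVec a b I i ≤ b i := by
  unfold eVec
  split_ifs
  exacts [le_rfl, hab i]

theorem inf_inf_le_dnf [Lattice B] [BoundedOrder B] (c : Finset (Fin n) → B) (x : Fin n → B)
    (I : Finset (Fin n)) : c I ⊓ I.inf x ≤ dnf c x :=
  le_sup (f := fun I => c I ⊓ I.inf x) (mem_powerset.2 (subset_univ I))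

variable [BooleanAlgebra B] {a b : Fin n → B} {f : (Fin n → B) → B} {c : Finset (Fin n) → B}

theorem dnf_eVec_inf_le (hc : Monotone c) (I : Finset (Fin n)) :
    dnf c (eVec a b I) ⊓ (univ \ I).inf (fun i => (a i)ᶜ) ≤ c I := by
  rw [dnf, sup_inf_distrib_right]
  refine Finset.sup_le fun K _ => ?_
  by_cases hKI : K ⊆ I
  · exact inf_le_left.trans (inf_le_left.trans (hc hKI))
  obtain ⟨j, hjK, hjI⟩ := not_subset.1 hKI
  have hx : K.inf (eVec a b I) ≤ a j := (inf_le hjK).trans (eVec_of_notMem a b hjI).le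
  have ha : (univ \ I).inf (fun i => (a i)ᶜ) ≤ (a j)ᶜ :=
    inf_le (mem_sdiff.2 ⟨mem_univ j, hjI⟩)
  calc c K ⊓ K.inf (eVec a b I) ⊓ (univ \ I).inf (fun i => (a i)ᶜ)
      ≤ a j ⊓ (a j)ᶜ := inf_le_inf (inf_le_right.trans hx) ha
    _ = ⊥ := inf_compl_eq_bot
    _ ≤ c I := bot_le

theorem le_dnf_eVec_sup (I : Finset (Fin n)) :
    c I ≤ dnf c (eVec a b I) ⊔ I.sup fun i => (b i)ᶜ := by
  rw [← Finset.compl_inf, ← himp_eq, le_himp_iff,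
    inf_congr rfl fun i hi => (eVec_of_mem a b hi).symm]
  exact inf_inf_le_dnf c _ I

theorem dnf_eVec_le (hab : ∀ i, a i ≤ b i)
    (hstar : ∀ I k, f (eVec a b I) ⊓ a k ≤ f (eVec a b (I.erase k)))
    (hmono : Monotone fun I => f (eVec a b I))
    (hupper : ∀ I, c I ≤ f (eVec a b I) ⊔ I.sup fun i => (b i)ᶜ) (J : Finset (Fin n)) :
    dnf c (eVec a b J) ≤ f (eVec a b J) := by
  refine Finset.sup_le fun I _ => ?_
  have hcI : c I ⊓ I.inf b ≤ f (eVec a b I) := by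
    rw [← le_himp_iff, himp_eq, Finset.compl_inf]
    exact hupper I
  have hxb : I.inf (eVec a b J) ≤ I.inf b := inf_mono_fun fun i _ => eVec_le hab J i
  have hxa : I.inf (eVec a b J) ≤ (I \ J).inf a := by
    rw [← inf_congr rfl fun i hi => eVec_of_notMem a b (mem_sdiff.1 hi).2]
    exact inf_mono sdiff_subset
  calc c I ⊓ I.inf (eVec a b J)
      ≤ f (eVec a b I) ⊓ I.inf (eVec a b J) :=
        le_inf ((inf_le_inf_left _ hxb).trans hcI) inf_le_right
    _ ≤ f (eVec a b I) ⊓ (I \ J).inf a := inf_le_inf_left _ hxa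
    _ ≤ f (eVec a b (I \ (I \ J))) := inf_inf_le_sdiff hstar I (I \ J)
    _ ≤ f (eVec a b J) := by
      rw [sdiff_sdiff_self_left]
      exact hmono inter_subset_right

theorem le_dnf_eVec (hab : ∀ i, a i ≤ b i)
    (hstar : ∀ I k, f (eVec a b I) ⊓ (b k)ᶜ ≤ f (eVec a b (I.erase k)))
    (hmono : Monotone fun I => f (eVec a b I))
    (hlower : ∀ I, f (eVec a b I) ⊓ (univ \ I).inf (fun i => (a i)ᶜ) ≤ c I)
    (J : Finset (Fin n)) :
    f (eVec a b J) ≤ dnf c (eVec a b J) := by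
  set x := eVec a b J
  have hminterm : ∀ K, f x ⊓ (K.inf x ⊓ (univ \ K).inf fun i => (x i)ᶜ) ≤ c K ⊓ K.inf x := by
    intro K
    have hxb : (univ \ K).inf (fun i => (x i)ᶜ) ≤ (J \ K).inf fun i => (b i)ᶜ := by
      rw [← inf_congr rfl fun i hi => congrArg compl (eVec_of_mem a b (mem_sdiff.1 hi).1)]
      exact inf_mono (sdiff_subset_sdiff (subset_univ J) le_rfl)
    have hxa : (univ \ K).inf (fun i => (x i)ᶜ) ≤ (univ \ K).inf fun i => (a i)ᶜ :=
      inf_mono_fun fun i _ => compl_le_compl (le_eVec hab J i)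
    have hfK : f x ⊓ (univ \ K).inf (fun i => (x i)ᶜ) ≤ f (eVec a b K) :=
      calc f x ⊓ (univ \ K).inf (fun i => (x i)ᶜ)
          ≤ f x ⊓ (J \ K).inf (fun i => (b i)ᶜ) := inf_le_inf_left _ hxb
        _ ≤ f (eVec a b (J \ (J \ K))) := inf_inf_le_sdiff hstar J (J \ K)
        _ ≤ f (eVec a b K) := by
          rw [sdiff_sdiff_self_left]
          exact hmono inter_subset_right
    refine le_inf ?_ (inf_le_right.trans inf_le_left)
    refine (le_inf ?_ ?_).trans (hlower K)
    · exact (inf_le_inf_left _ inf_le_right).trans hfK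
    · exact inf_le_right.trans (inf_le_right.trans hxa)
  calc f x
      = univ.powerset.sup fun K => f x ⊓ (K.inf x ⊓ (univ \ K).inf fun i => (x i)ᶜ) := by
        rw [← sup_inf_distrib_left, sup_powerset_inf_inf_compl, inf_top_eq]
    _ ≤ dnf c x := sup_mono_fun fun K _ => hminterm K

theorem dnf_eVec_eq_iff (hab : ∀ i, a i ≤ b i)
    (hstarA : ∀ I k, f (eVec a b (insert k I)) ⊓ a k ≤ f (eVec a b I))
    (hstarB : ∀ I k, f (eVec a b I) ≤ f (eVec a b (I.erase k)) ⊔ b k)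
    (hmono : Monotone fun I => f (eVec a b I)) (hc : Monotone c) :
    (∀ J, dnf c (eVec a b J) = f (eVec a b J)) ↔
      ∀ I, f (eVec a b I) ⊓ (univ \ I).inf (fun i => (a i)ᶜ) ≤ c I ∧
        c I ≤ f (eVec a b I) ⊔ I.sup fun i => (b i)ᶜ := by
  have hstarB' : ∀ I k, f (eVec a b I) ⊓ (b k)ᶜ ≤ f (eVec a b (I.erase k)) := fun I k => by
    rw [← sdiff_eq, sdiff_le_iff']
    exact hstarB I k
  refine ⟨fun h I => ⟨?_, ?_⟩, fun h J => le_antisymm ?_ ?_⟩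
  · exact h I ▸ dnf_eVec_inf_le hc I
  · exact h I ▸ le_dnf_eVec_sup I
  · exact dnf_eVec_le hab (inf_le_erase_of_inf_le_insert hstarA) hmono (fun I => (h I).2) J
  · exact le_dnf_eVec hab hstarB' hmono (fun I => (h I).1) J

end Interpolation

theorem stmt_17_general {n : ℕ} {B : Type*} [CompleteBooleanAlgebra B] (L : Set B)
    (a b : Fin n → B)
    (hab : ∀ i, a i < b i)
    (f : (Fin n → B) → B)
    (hmono : ∀ I J : Finset (Fin n), I ⊆ J → f (eVec a b I) ≤ f (eVec a b J))
    (hstar : ∀ (I : Finset (Fin n)) (k : Fin n),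
      f (eVec a b (insert k I)) ⊓ a k ≤ f (eVec a b I) ∧
        f (eVec a b I) ≤ f (eVec a b (I.erase k)) ⊔ b k)
    (c : Finset (Fin n) → B) (hcL : ∀ I : Finset (Fin n), c I ∈ L)
    (hc : ∀ I J : Finset (Fin n), I ⊆ J → c I ≤ c J) :
    (∀ J : Finset (Fin n), dnf c (eVec a b J) = f (eVec a b J)) ↔
      (∀ I : Finset (Fin n),
        sInf {x ∈ L | f (eVec a b I) ⊓ (Finset.univ \ I).inf (fun i => (a i)ᶜ) ≤ x} ≤
            c I ∧
          c I ≤ sSup {x ∈ L | x ≤ f (eVec a b I) ⊔ I.sup (fun i => (b i)ᶜ)}) := by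
  simp only [sInf_sep_le_iff (hcL _), le_sSup_sep_iff (hcL _)]
  exact dnf_eVec_eq_iff (fun i => (hab i).le) (fun I k => (hstar I k).1)
    (fun I k => (hstar I k).2) (fun I J => hmono I J) (fun I J => hc I J)

/-- complete lattice version: if `L` is a complete (distributive)
sublattice of a (complete) Boolean algebra `B`, closed under the relevant meets and
joins, and `f` is monotone and satisfies (★), then a polynomial function over `L` with
monotone coefficients `c_I ∈ L` interpolates `f` on the cuboid vertices if and only if
`cl(c_I⁻) ≤ c_I ≤ int(c_I⁺)` for all `I`, where `cl(x) = ⋀{a ∈ L : a ≥ x}` and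
`int(x) = ⋁{a ∈ L : a ≤ x}`. -/
theorem stmt_17 {n : ℕ} {B : Type*} [CompleteBooleanAlgebra B] (L : Set B)
    (hLinf : ∀ S : Set B, S ⊆ L → sInf S ∈ L) (hLsup : ∀ S : Set B, S ⊆ L → sSup S ∈ L)
    (a b : Fin n → B) (haL : ∀ i, a i ∈ L) (hbL : ∀ i, b i ∈ L)
    (hab : ∀ i, a i < b i)
    (f : (Fin n → B) → B) (hfL : ∀ I : Finset (Fin n), f (eVec a b I) ∈ L)
    (hmono : ∀ I J : Finset (Fin n), I ⊆ J → f (eVec a b I) ≤ f (eVec a b J))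
    (hstar : ∀ (I : Finset (Fin n)) (k : Fin n),
      f (eVec a b (insert k I)) ⊓ a k ≤ f (eVec a b I) ∧
        f (eVec a b I) ≤ f (eVec a b (I.erase k)) ⊔ b k)
    (c : Finset (Fin n) → B) (hcL : ∀ I : Finset (Fin n), c I ∈ L)
    (hc : ∀ I J : Finset (Fin n), I ⊆ J → c I ≤ c J) :
    (∀ J : Finset (Fin n), dnf c (eVec a b J) = f (eVec a b J)) ↔
      (∀ I : Finset (Fin n),
        sInf {x ∈ L | f (eVec a b I) ⊓ (Finset.univ \ I).inf (fun i => (a i)ᶜ) ≤ x} ≤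
            c I ∧
          c I ≤ sSup {x ∈ L | x ≤ f (eVec a b I) ⊔ I.sup (fun i => (b i)ᶜ)}) :=
  stmt_17_general L a b hab f hmono hstar c hcL hc
end
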